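/- Let X be a finite index set, q > 0, 0 < c₁ ≤ c₂, and let (χ_ξ)_{ξ∈X} be a family of vectors in a real normed space W satisfying the Riesz stability bounds c₁·q·‖β‖_{ℓ²} ≤ ‖Σ_{ξ∈X} β_ξ χ_ξ‖_W ≤ c₂·q·‖β‖_{ℓ²} for every β ∈ ℝ^X. Let A and B be invertible real X×X matrices, let f ∈ ℝ^X, and set α = A^{−1}f, α′ = B^{−1}f, u = Σ_ξ α_ξ χ_ξ and u′ = Σ_ξ α′_ξ χ_ξ. Then ‖u − u′‖_W ≤ (c₂/c₁)·‖B^{−1}‖₂·‖B − A‖₂·‖u‖_W, where ‖·‖₂ is the spectral (operator 2-) norm of matrices. -/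

import Mathlib

/-!
Since `A⁻¹f − B⁻¹f = B⁻¹ (B − A) A⁻¹f`, the upper Riesz bound and two applications of the
spectral-norm bound give `‖u − u′‖ ≤ c₂ q ‖B⁻¹‖₂ ‖B − A‖₂ ‖α‖₂`, and the lower Riesz bound
gives `‖α‖₂ ≤ ‖u‖ / (c₁ q)`. The spectral norm is the operator norm of `Matrix.toEuclideanCLM`.
-/

open Matrix

noncomputable section

noncomputable def specNormR {ι : Type*} [Fintype ι] (M : Matrix ι ι ℝ) : ℝ :=
  sSup {r : ℝ | ∃ v : ι → ℝ, ∑ i, v i ^ 2 ≤ 1 ∧ r = Real.sqrt (∑ i, M.mulVec v i ^ 2)}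

section SpectralNorm

variable {ι : Type*} [Fintype ι]

lemma norm_toLp_two_eq_sqrt_sum_sq (v : ι → ℝ) :
    ‖(WithLp.toLp 2 v : EuclideanSpace ℝ ι)‖ = √(∑ i, v i ^ 2) := by
  simp [EuclideanSpace.norm_eq, sq_abs]

variable [DecidableEq ι]

lemma specNormR_eq_norm_toEuclideanCLM (M : Matrix ι ι ℝ) :
    specNormR M = ‖toEuclideanCLM (𝕜 := ℝ) M‖ := by
  rw [← ContinuousLinearMap.sSup_unitClosedBall_eq_norm, specNormR]
  congr 1
  ext r
  simp only [Set.mem_ofPred_eq, Set.mem_image, Metric.mem_closedBall, dist_zero_right]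
  constructor
  · rintro ⟨v, hv, rfl⟩
    refine ⟨WithLp.toLp 2 v, ?_, ?_⟩
    · rwa [norm_toLp_two_eq_sqrt_sum_sq, Real.sqrt_le_one]
    · rw [toEuclideanCLM_toLp, norm_toLp_two_eq_sqrt_sum_sq]
  · rintro ⟨x, hx, rfl⟩
    refine ⟨x.ofLp, ?_, ?_⟩
    · rwa [← x.toLp_ofLp, norm_toLp_two_eq_sqrt_sum_sq, Real.sqrt_le_one] at hx
    · rw [← x.toLp_ofLp, toEuclideanCLM_toLp, norm_toLp_two_eq_sqrt_sum_sq]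

lemma specNormR_nonneg (M : Matrix ι ι ℝ) : 0 ≤ specNormR M := by
  rw [specNormR_eq_norm_toEuclideanCLM]
  exact norm_nonneg _

lemma sqrt_sum_sq_mulVec_le (M : Matrix ι ι ℝ) (v : ι → ℝ) :
    √(∑ i, (M *ᵥ v) i ^ 2) ≤ specNormR M * √(∑ i, v i ^ 2) := by
  simpa only [specNormR_eq_norm_toEuclideanCLM, toEuclideanCLM_toLp,
    norm_toLp_two_eq_sqrt_sum_sq] using (toEuclideanCLM (𝕜 := ℝ) M).le_opNorm (WithLp.toLp 2 v)

end SpectralNorm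

lemma inv_mulVec_sub_inv_mulVec {ι R : Type*} [Fintype ι] [DecidableEq ι] [CommRing R]
    {A B : Matrix ι ι R} (hA : IsUnit A.det) (hB : IsUnit B.det) (f : ι → R) :
    A⁻¹ *ᵥ f - B⁻¹ *ᵥ f = B⁻¹ *ᵥ ((B - A) *ᵥ (A⁻¹ *ᵥ f)) := by
  have hAf : A *ᵥ (A⁻¹ *ᵥ f) = f := by rw [mulVec_mulVec, mul_nonsing_inv _ hA, one_mulVec]
  rw [sub_mulVec, mulVec_sub, hAf, mulVec_mulVec, nonsing_inv_mul _ hB, one_mulVec]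

/-- abstract perturbation of coefficient matrices. Let `(χ_ξ)_{ξ∈X}` be
a Riesz-stable family in a normed space `W`:
`c₁·q·‖β‖₂ ≤ ‖∑ β_ξ χ_ξ‖ ≤ c₂·q·‖β‖₂`. For invertible matrices `A, B` and `f ∈ ℝ^X`,
setting `u = ∑ (A⁻¹f)_ξ χ_ξ` and `u′ = ∑ (B⁻¹f)_ξ χ_ξ`, one has
`‖u − u′‖ ≤ (c₂/c₁)·‖B⁻¹‖₂·‖B − A‖₂·‖u‖`. -/
theorem statement11 {X : Type*} [Fintype X] [DecidableEq X]
    {W : Type*} [NormedAddCommGroup W] [NormedSpace ℝ W]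
    (q c₁ c₂ : ℝ) (hq : 0 < q) (hc₁ : 0 < c₁) (hc : c₁ ≤ c₂)
    (χ : X → W)
    (hlow : ∀ β : X → ℝ, c₁ * q * Real.sqrt (∑ ξ, β ξ ^ 2) ≤ ‖∑ ξ, β ξ • χ ξ‖)
    (hhigh : ∀ β : X → ℝ, ‖∑ ξ, β ξ • χ ξ‖ ≤ c₂ * q * Real.sqrt (∑ ξ, β ξ ^ 2))
    (A B : Matrix X X ℝ) (hA : IsUnit A.det) (hB : IsUnit B.det)
    (f : X → ℝ) :
    ‖(∑ ξ, A⁻¹.mulVec f ξ • χ ξ) - ∑ ξ, B⁻¹.mulVec f ξ • χ ξ‖ ≤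
      c₂ / c₁ * specNormR B⁻¹ * specNormR (B - A) * ‖∑ ξ, A⁻¹.mulVec f ξ • χ ξ‖ := by
  set α := A⁻¹ *ᵥ f
  set α' := B⁻¹ *ᵥ f
  have hcq : 0 < c₁ * q := mul_pos hc₁ hq
  have hc₂q : 0 ≤ c₂ * q := mul_nonneg (hc₁.trans_le hc).le hq.le
  have hα : √(∑ ξ, α ξ ^ 2) ≤ ‖∑ ξ, α ξ • χ ξ‖ / (c₁ * q) := by
    rw [le_div_iff₀ hcq, mul_comm]
    exact hlow α
  have hB₀ := specNormR_nonneg B⁻¹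
  have hBA₀ := specNormR_nonneg (B - A)
  calc ‖(∑ ξ, α ξ • χ ξ) - ∑ ξ, α' ξ • χ ξ‖
      = ‖∑ ξ, (α - α') ξ • χ ξ‖ :=
        congrArg norm (map_sub (Fintype.linearCombination ℝ χ) α α').symm
    _ ≤ c₂ * q * √(∑ ξ, (α - α') ξ ^ 2) := hhigh _
    _ ≤ c₂ * q * (specNormR B⁻¹ * (specNormR (B - A) * √(∑ ξ, α ξ ^ 2))) := by
      rw [inv_mulVec_sub_inv_mulVec hA hB]
      gcongr
      exact (sqrt_sum_sq_mulVec_le _ _).trans (by gcongr; exact sqrt_sum_sq_mulVec_le _ _)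
    _ ≤ c₂ * q * (specNormR B⁻¹ * (specNormR (B - A) * (‖∑ ξ, α ξ • χ ξ‖ / (c₁ * q)))) := by
      gcongr
    _ = c₂ / c₁ * specNormR B⁻¹ * specNormR (B - A) * ‖∑ ξ, α ξ • χ ξ‖ := by
      field_simp
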